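/- Assume exactness, and let the SHB iterates be started from x0, x1 ∈ ℝ^d with x0 − x1 ∈ Range(Aᵀ). If ω = 1/λmax and β = (1 − sqrt(0.99 λmin⁺ / λmax))², then there exists a constant C > 0 such that for all k ≥ 0, ‖E[x_k − x*]‖² ≤ (1 − sqrt(0.99 λmin⁺ / λmax))^{2k} C, where x* is the orthogonal projection of x0 onto {x : A x = b}; hence ‖E[x_k − x*]‖² falls below ε after O(sqrt(λmax/λmin⁺) log(1/ε)) iterations. -/

import Mathlib

/-!
Taking expectations, SHB becomes deterministic heavy ball on the mean errors
`e k = E[x k] - x*`: `x k` is a measurable function of `H 1, …, H (k-1)`, hence independent of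
`H k`, so `E[H k (A x k - b)] = W A e k`. With `ρ = 1 - σ`, `σ = sqrt (0.99 λmin⁺ / λmax)`, this
reads `e (k+2) = N e (k+1) - ρ² e k` for `N = (1 + ρ²) I - Aᵀ W A / λmax`. The errors stay in
`Range Aᵀ` (`x0 - x*` is orthogonal to `ker A`), on which `0 ≤ N ≤ c I` with
`c = 1 + ρ² - λmin⁺ / λmax`, and `c < 2ρ` is exactly `σ² < λmin⁺ / λmax`. The energy
`‖e (k+1)‖² - ⟪e (k+1), N e k⟫ + ρ² ‖e k‖²` is multiplied by exactly `ρ²` at each step and, by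
positivity of `N`, dominates `(1 - c / 2ρ) ‖e (k+1)‖²`. The iteration count then follows from
`1 - σ ≤ exp (-σ)`.
-/

open Matrix MeasureTheory ProbabilityTheory

/-- Matrices over measurable entries carry the product σ-algebra. -/
local instance {m n : ℕ} : MeasurableSpace (Matrix (Fin m) (Fin n) ℝ) :=
  MeasurableSpace.pi

theorem Matrix.dotProduct_self_nonneg {n R : Type*} [Fintype n] [Ring R] [LinearOrder R]
    [IsOrderedRing R] (v : n → R) : 0 ≤ v ⬝ᵥ v :=
  Fintype.sum_nonneg fun i => mul_self_nonneg (v i)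

theorem Matrix.PosSemidef.two_mul_mul_dotProduct_mulVec_le {n : Type*} [Fintype n]
    {N : Matrix n n ℝ} (hN : N.PosSemidef) (u v : n → ℝ) (t : ℝ) :
    2 * t * (u ⬝ᵥ N *ᵥ v) ≤ u ⬝ᵥ N *ᵥ u + t ^ 2 * (v ⬝ᵥ N *ᵥ v) := by
  have h := hN.dotProduct_mulVec_nonneg (u - t • v)
  have hsym : v ⬝ᵥ N *ᵥ u = u ⬝ᵥ N *ᵥ v := by
    rw [dotProduct_mulVec, ← mulVec_transpose, dotProduct_comm,
      ← conjTranspose_eq_transpose_of_trivial, hN.isHermitian.eq]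
  simp only [star_trivial, mulVec_sub, mulVec_smul, sub_dotProduct, dotProduct_sub,
    smul_dotProduct, dotProduct_smul, smul_eq_mul, hsym] at h
  nlinarith

theorem Matrix.dotProduct_eq_zero_of_forall_le {n : Type*} [Fintype n] {w z : n → ℝ}
    (h : ∀ t : ℝ, w ⬝ᵥ w ≤ (w - t • z) ⬝ᵥ (w - t • z)) : w ⬝ᵥ z = 0 := by
  have hz := dotProduct_self_nonneg z
  have ht := h ((w ⬝ᵥ z) / (z ⬝ᵥ z + 1))
  simp only [sub_dotProduct, dotProduct_sub, smul_dotProduct, dotProduct_smul, smul_eq_mul,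
    dotProduct_comm z w] at ht
  have hpos : 0 < z ⬝ᵥ z + 1 := by linarith
  field_simp at ht
  nlinarith [sq_nonneg (w ⬝ᵥ z)]

theorem Matrix.mem_range_mulVecLin_transpose {K m n : Type*} [Field K] [Fintype m] [Fintype n]
    [DecidableEq m] [DecidableEq n] (A : Matrix m n K) {v : n → K}
    (hv : ∀ z, A *ᵥ z = 0 → v ⬝ᵥ z = 0) : v ∈ LinearMap.range Aᵀ.mulVecLin := by
  have hmem : dotProductEquiv K n v ∈ LinearMap.range A.mulVecLin.dualMap := by
    rw [LinearMap.range_dualMap_eq_dualAnnihilator_ker, Submodule.mem_dualAnnihilator]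
    exact hv
  obtain ⟨φ, hφ⟩ := hmem
  set u := (dotProductEquiv K m).symm φ
  have hφu (w : m → K) : φ w = u ⬝ᵥ w := by
    conv_lhs => rw [← (dotProductEquiv K m).apply_symm_apply φ]
    rfl
  refine ⟨u, (dotProductEquiv K n).injective (LinearMap.ext fun z => ?_)⟩
  have := LinearMap.congr_fun hφ z
  simp only [LinearMap.dualMap_apply, mulVecLin_apply, dotProductEquiv_apply_apply, hφu] at this ⊢
  rw [← this, dotProduct_mulVec, mulVec_transpose]

theorem Matrix.sub_mem_range_mulVecLin_transpose_of_forall_le {m n : Type*} [Fintype m]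
    [Fintype n] [DecidableEq m] [DecidableEq n] (A : Matrix m n ℝ) {x₀ x' : n → ℝ}
    (h : ∀ y, A *ᵥ y = A *ᵥ x' → (x₀ - x') ⬝ᵥ (x₀ - x') ≤ (x₀ - y) ⬝ᵥ (x₀ - y)) :
    x₀ - x' ∈ LinearMap.range Aᵀ.mulVecLin := by
  refine A.mem_range_mulVecLin_transpose fun z hz => dotProduct_eq_zero_of_forall_le fun t => ?_
  have := h (x' + t • z) (by rw [mulVec_add, mulVec_smul, hz, smul_zero, add_zero])
  rwa [← sub_sub] at this

theorem mem_range_mulVecLin_transpose_of_recurrence {m n : Type*} [Fintype m] [Fintype n]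
    {A : Matrix m n ℝ} {W : Matrix m m ℝ} {ω β : ℝ} {e : ℕ → n → ℝ}
    (h0 : e 0 ∈ LinearMap.range Aᵀ.mulVecLin) (h1 : e 1 ∈ LinearMap.range Aᵀ.mulVecLin)
    (hrec : ∀ k, e (k + 2) = e (k + 1) - ω • ((Aᵀ * W * A) *ᵥ e (k + 1)) + β • (e (k + 1) - e k))
    (k : ℕ) : e k ∈ LinearMap.range Aᵀ.mulVecLin := by
  induction k using Nat.twoStepInduction with
  | zero => exact h0
  | one => exact h1
  | more k ih₀ ih₁ =>
    have hM : (Aᵀ * W * A) *ᵥ e (k + 1) ∈ LinearMap.range Aᵀ.mulVecLin :=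
      ⟨W *ᵥ A *ᵥ e (k + 1), by simp only [mulVecLin_apply, mulVec_mulVec, Matrix.mul_assoc]⟩
    rw [hrec]
    exact add_mem (sub_mem ih₁ (Submodule.smul_mem _ ω hM))
      (Submodule.smul_mem _ β (sub_mem ih₁ ih₀))

section HeavyBall

variable {n : Type*} [Fintype n] {N : Matrix n n ℝ} {ρ c : ℝ}

def heavyBallEnergy (N : Matrix n n ℝ) (ρ : ℝ) (u v : n → ℝ) : ℝ :=
  u ⬝ᵥ u - u ⬝ᵥ N *ᵥ v + ρ ^ 2 * (v ⬝ᵥ v)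

theorem heavyBallEnergy_step (hN : Nᵀ = N) (u v : n → ℝ) :
    heavyBallEnergy N ρ (N *ᵥ u - ρ ^ 2 • v) u = ρ ^ 2 * heavyBallEnergy N ρ u v := by
  have hsym : (N *ᵥ u) ⬝ᵥ v = u ⬝ᵥ N *ᵥ v := by
    rw [dotProduct_comm, dotProduct_mulVec, ← mulVec_transpose, hN, dotProduct_comm]
  simp only [heavyBallEnergy, sub_dotProduct, dotProduct_sub, smul_dotProduct, dotProduct_smul,
    smul_eq_mul, hsym]
  ring

theorem mul_dotProduct_self_le_heavyBallEnergy (hN : N.PosSemidef) (hcρ : c ≤ 2 * ρ)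
    {u v : n → ℝ} (hu : u ⬝ᵥ N *ᵥ u ≤ c * (u ⬝ᵥ u)) (hv : v ⬝ᵥ N *ᵥ v ≤ c * (v ⬝ᵥ v)) :
    (2 * ρ - c) * (u ⬝ᵥ u) ≤ 2 * ρ * heavyBallEnergy N ρ u v := by
  have hcross := hN.two_mul_mul_dotProduct_mulVec_le u v ρ
  have hv0 : 0 ≤ ρ ^ 2 * ((2 * ρ - c) * (v ⬝ᵥ v)) :=
    mul_nonneg (sq_nonneg ρ) (mul_nonneg (by linarith) (dotProduct_self_nonneg v))
  unfold heavyBallEnergy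
  nlinarith

theorem dotProduct_self_le_of_recurrence {e : ℕ → n → ℝ} (hN : N.PosSemidef) (hρ : 0 < ρ)
    (hcρ : c < 2 * ρ) (hbound : ∀ k, e k ⬝ᵥ N *ᵥ e k ≤ c * (e k ⬝ᵥ e k))
    (hrec : ∀ k, e (k + 2) = N *ᵥ e (k + 1) - ρ ^ 2 • e k) :
    ∃ C, 0 < C ∧ ∀ k, e k ⬝ᵥ e k ≤ ρ ^ (2 * k) * C := by
  have hsymm : Nᵀ = N := by
    rw [← conjTranspose_eq_transpose_of_trivial, hN.isHermitian.eq]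
  have hgap : 0 < 2 * ρ - c := by linarith
  have hlower (k : ℕ) : (2 * ρ - c) * (e (k + 1) ⬝ᵥ e (k + 1)) ≤
      2 * ρ * heavyBallEnergy N ρ (e (k + 1)) (e k) :=
    mul_dotProduct_self_le_heavyBallEnergy hN hcρ.le (hbound (k + 1)) (hbound k)
  set E₀ := heavyBallEnergy N ρ (e 1) (e 0)
  have henergy (k : ℕ) : heavyBallEnergy N ρ (e (k + 1)) (e k) = (ρ ^ 2) ^ k * E₀ := by
    induction k with
    | zero => simp [E₀]
    | succ k ih => rw [hrec, heavyBallEnergy_step hsymm, ih, pow_succ]; ring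
  have hE₀ : 0 ≤ E₀ := by
    have := hlower 0
    simp only [zero_add] at this
    nlinarith [dotProduct_self_nonneg (e 1)]
  set D := 2 * E₀ / (ρ * (2 * ρ - c))
  have hD : 0 ≤ D := div_nonneg (by positivity) (mul_pos hρ hgap).le
  refine ⟨e 0 ⬝ᵥ e 0 + D + 1, by linarith [dotProduct_self_nonneg (e 0)], ?_⟩
  rintro (_ | k)
  · rw [Nat.mul_zero, pow_zero, one_mul]
    linarith
  · calc e (k + 1) ⬝ᵥ e (k + 1) ≤ 2 * ρ * ((ρ ^ 2) ^ k * E₀) / (2 * ρ - c) := by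
          rw [le_div_iff₀' hgap, ← henergy]; exact hlower k
      _ = ρ ^ (2 * (k + 1)) * D := by simp only [D]; field_simp; ring
      _ ≤ ρ ^ (2 * (k + 1)) * (e 0 ⬝ᵥ e 0 + D + 1) := by
          gcongr; linarith [dotProduct_self_nonneg (e 0)]

theorem heavyBall_dotProduct_self_le [DecidableEq n] {M : Matrix n n ℝ}
    (hM : Mᵀ = M) {lmin lmax σ : ℝ} (hlmax : 0 < lmax) (hle : lmin ≤ lmax)
    (hσ : σ ^ 2 < lmin / lmax) (hMmax : ∀ v, v ⬝ᵥ M *ᵥ v ≤ lmax * (v ⬝ᵥ v))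
    {e : ℕ → n → ℝ} (hMmin : ∀ k, lmin * (e k ⬝ᵥ e k) ≤ e k ⬝ᵥ M *ᵥ e k)
    (hrec : ∀ k, e (k + 2) =
      e (k + 1) - (1 / lmax) • (M *ᵥ e (k + 1)) + (1 - σ) ^ 2 • (e (k + 1) - e k)) :
    ∃ C, 0 < C ∧ ∀ k, e k ⬝ᵥ e k ≤ (1 - σ) ^ (2 * k) * C := by
  set ρ := 1 - σ
  set N : Matrix n n ℝ := (1 + ρ ^ 2) • 1 - (1 / lmax) • M
  have hratio : lmin / lmax ≤ 1 := (div_le_one hlmax).2 hle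
  have hρ : 0 < ρ := by nlinarith
  have hquad (u v : n → ℝ) : u ⬝ᵥ N *ᵥ v = (1 + ρ ^ 2) * (u ⬝ᵥ v) - (u ⬝ᵥ M *ᵥ v) / lmax := by
    simp only [N, sub_mulVec, smul_mulVec, one_mulVec, dotProduct_sub, dotProduct_smul,
      smul_eq_mul]
    ring
  have hN : N.PosSemidef := by
    refine .of_dotProduct_mulVec_nonneg ?_ fun v => ?_
    · simp [N, IsHermitian, conjTranspose_eq_transpose_of_trivial, hM]
    · have : v ⬝ᵥ M *ᵥ v / lmax ≤ v ⬝ᵥ v := (div_le_iff₀ hlmax).2 (by linarith [hMmax v])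
      rw [star_trivial, hquad]
      nlinarith [dotProduct_self_nonneg v, sq_nonneg ρ]
  have hbound (k : ℕ) : e k ⬝ᵥ N *ᵥ e k ≤ (1 + ρ ^ 2 - lmin / lmax) * (e k ⬝ᵥ e k) := by
    have : lmin / lmax * (e k ⬝ᵥ e k) ≤ e k ⬝ᵥ M *ᵥ e k / lmax := by
      rw [div_mul_eq_mul_div]
      exact div_le_div_of_nonneg_right (hMmin k) hlmax.le
    rw [hquad]
    linarith
  refine dotProduct_self_le_of_recurrence hN hρ (by nlinarith) hbound fun k => ?_
  rw [hrec, sub_mulVec, smul_mulVec, smul_mulVec, one_mulVec]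
  module

end HeavyBall

theorem one_sub_pow_two_mul_mul_le {σ C ε : ℝ} {k : ℕ} (hσ1 : σ ≤ 1)
    (hC : 0 ≤ C) (hε : 0 < ε) (hεC : ε * C ≤ 1) (hk : Real.log (1 / ε) ≤ k * σ) :
    (1 - σ) ^ (2 * k) * C ≤ ε := by
  have hpow : (1 - σ) ^ (2 * k) ≤ ε ^ 2 := calc
    (1 - σ) ^ (2 * k) ≤ Real.exp (-σ) ^ (2 * k) := by
      gcongr
      linarith [Real.add_one_le_exp (-σ)]
    _ = Real.exp (-(2 * (k * σ))) := by rw [← Real.exp_nat_mul]; push_cast; ring_nf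
    _ ≤ Real.exp (2 * Real.log ε) := by
      gcongr
      rw [one_div, Real.log_inv] at hk
      linarith
    _ = ε ^ 2 := by rw [mul_comm, Real.exp_mul, Real.exp_log hε, Real.rpow_two]
  calc (1 - σ) ^ (2 * k) * C ≤ ε ^ 2 * C := by gcongr
    _ = ε * (ε * C) := by ring
    _ ≤ ε := mul_le_of_le_one_right hε.le hεC

theorem one_sub_sqrt_pow_two_mul_mul_le {r lmin lmax C ε : ℝ} {k : ℕ} (hr : 0 < r) (hr1 : r ≤ 1)
    (hlmin : 0 < lmin) (hle : lmin ≤ lmax) (hC : 0 ≤ C) (hε : 0 < ε) (hεC : ε * C ≤ 1)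
    (hk : 1 / Real.sqrt r * Real.sqrt (lmax / lmin) * Real.log (1 / ε) ≤ k) :
    (1 - Real.sqrt (r * lmin / lmax)) ^ (2 * k) * C ≤ ε := by
  have hlmax : 0 < lmax := hlmin.trans_le hle
  set σ := Real.sqrt (r * lmin / lmax)
  have hσ1 : σ ≤ 1 := by
    rw [Real.sqrt_le_one, mul_div_assoc]
    exact mul_le_one₀ hr1 (by positivity) ((div_le_one hlmax).2 hle)
  have hscale : 1 / Real.sqrt r * Real.sqrt (lmax / lmin) * σ = 1 := by
    rw [mul_assoc, ← Real.sqrt_mul (by positivity)]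
    field_simp
  refine one_sub_pow_two_mul_mul_le hσ1 hC hε hεC ?_
  calc Real.log (1 / ε) = 1 / Real.sqrt r * Real.sqrt (lmax / lmin) * Real.log (1 / ε) * σ := by
        rw [mul_right_comm, hscale, one_mul]
    _ ≤ k * σ := mul_le_mul_of_nonneg_right hk (Real.sqrt_nonneg _)

@[fun_prop]
theorem Measurable.matrix_mulVec {α : Type*} [MeasurableSpace α] {m n : ℕ}
    {f : α → Matrix (Fin m) (Fin n) ℝ} {g : α → Fin n → ℝ} (hf : Measurable f)
    (hg : Measurable g) : Measurable fun a => f a *ᵥ g a := by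
  refine measurable_pi_lambda _ fun i => ?_
  simp only [mulVec, dotProduct]
  refine Finset.measurable_sum _ fun j _ => ?_
  exact ((measurable_pi_apply j).comp ((measurable_pi_apply i).comp hf)).mul
    ((measurable_pi_apply j).comp hg)

theorem measurable_matrix_apply {m n : ℕ} (i : Fin m) (j : Fin n) :
    Measurable fun M : Matrix (Fin m) (Fin n) ℝ => M i j :=
  (measurable_pi_apply j).comp (measurable_pi_apply i)

section RandomMatrix

variable {Ω : Type*} [MeasurableSpace Ω] {μ : Measure Ω}

theorem ProbabilityTheory.IndepFun.integrable_entry_mul {m n : ℕ} {H : Ω → Matrix (Fin m) (Fin n) ℝ}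
    {v : Ω → Fin n → ℝ} (hind : IndepFun H v μ)
    (hH : ∀ i j, Integrable (fun s => H s i j) μ) (hv : Integrable v μ) (i : Fin m) (j : Fin n) :
    Integrable (fun s => H s i j * v s j) μ :=
  (hind.comp (measurable_matrix_apply i j) (measurable_pi_apply j)).integrable_mul
    (hH i j) (integrable_pi_iff.1 hv j)

theorem ProbabilityTheory.IndepFun.integrable_mulVec {m n : ℕ} {H : Ω → Matrix (Fin m) (Fin n) ℝ}
    {v : Ω → Fin n → ℝ} (hind : IndepFun H v μ)
    (hH : ∀ i j, Integrable (fun s => H s i j) μ) (hv : Integrable v μ) :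
    Integrable (fun s => H s *ᵥ v s) μ := by
  refine integrable_pi_iff.2 fun i => ?_
  change Integrable (fun s => ∑ j, H s i j * v s j) μ
  exact integrable_finsetSum _ fun j _ => hind.integrable_entry_mul hH hv i j

theorem ProbabilityTheory.IndepFun.integral_mulVec {m n : ℕ} {H : Ω → Matrix (Fin m) (Fin n) ℝ}
    {v : Ω → Fin n → ℝ} (hind : IndepFun H v μ)
    (hH : ∀ i j, Integrable (fun s => H s i j) μ) (hv : Integrable v μ)
    {W : Matrix (Fin m) (Fin n) ℝ} (hW : ∀ i j, ∫ s, H s i j ∂μ = W i j) :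
    ∫ s, H s *ᵥ v s ∂μ = W *ᵥ ∫ s, v s ∂μ := by
  have hvj := integrable_pi_iff.1 hv
  ext i
  rw [eval_integral (integrable_pi_iff.1 (hind.integrable_mulVec hH hv))]
  change ∫ s, ∑ j, H s i j * v s j ∂μ = ∑ j, W i j * (∫ s, v s ∂μ) j
  rw [integral_finsetSum _ fun j _ => hind.integrable_entry_mul hH hv i j]
  refine Finset.sum_congr rfl fun j _ => ?_
  rw [eval_integral hvj, ← hW]
  have hentry := hind.comp (measurable_matrix_apply i j) (measurable_pi_apply j)
  exact hentry.integral_mul_eq_mul_integral (hH i j).aestronglyMeasurable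
    (hvj j).aestronglyMeasurable

theorem MeasureTheory.Integrable.const_mulVec {m n : Type*} [Fintype m] [Fintype n]
    (B : Matrix m n ℝ) {f : Ω → n → ℝ} (hf : Integrable f μ) : Integrable (fun s => B *ᵥ f s) μ :=
  (LinearMap.toContinuousLinearMap B.mulVecLin).integrable_comp hf

theorem MeasureTheory.integral_const_mulVec {m n : Type*} [Fintype m] [Fintype n]
    (B : Matrix m n ℝ) {f : Ω → n → ℝ} (hf : Integrable f μ) :
    ∫ s, B *ᵥ f s ∂μ = B *ᵥ ∫ s, f s ∂μ :=
  (LinearMap.toContinuousLinearMap B.mulVecLin).integral_comp_comm hf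

theorem Matrix.transpose_eq_self_of_ae_isHermitian {m : Type*} {H : Ω → Matrix m m ℝ}
    (hH : ∀ᵐ s ∂μ, (H s).IsHermitian) {W : Matrix m m ℝ} (hW : ∀ i j, W i j = ∫ s, H s i j ∂μ) :
    Wᵀ = W := by
  ext i j
  rw [transpose_apply, hW, hW]
  refine integral_congr_ae ?_
  filter_upwards [hH] with s hs using by simpa using hs.apply i j

end RandomMatrix

section TwoStep

variable {Ω α β : Type*} [MeasurableSpace α] [MeasurableSpace β] {G : β × β × α → β}
  {H : ℕ → Ω → α} {x : ℕ → Ω → β} {x₀ x₁ : β}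

theorem exists_measurable_eq_of_two_step (hG : Measurable G) (h0 : ∀ s, x 0 s = x₀)
    (h1 : ∀ s, x 1 s = x₁) (hrec : ∀ k s, x (k + 2) s = G (x (k + 1) s, x k s, H (k + 1) s))
    (k : ℕ) : ∃ φ : (Finset.range k → α) → β, Measurable φ ∧ ∀ s, x k s = φ fun i => H i s := by
  induction k using Nat.twoStepInduction with
  | zero => exact ⟨fun _ => x₀, measurable_const, h0⟩
  | one => exact ⟨fun _ => x₁, measurable_const, h1⟩
  | more k ih₀ ih₁ =>
    obtain ⟨φ₀, hφ₀, hx₀⟩ := ih₀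
    obtain ⟨φ₁, hφ₁, hx₁⟩ := ih₁
    have hres {j : ℕ} (hj : j ≤ k + 2) : Measurable fun (g : Finset.range (k + 2) → α)
        (i : Finset.range j) => g ⟨i, by grind⟩ :=
      measurable_pi_lambda _ fun _ => measurable_pi_apply _
    refine ⟨fun g => G (φ₁ fun i => g ⟨i, by grind⟩,
      φ₀ fun i => g ⟨i, by grind⟩, g ⟨k + 1, by simp⟩), ?_, fun s => ?_⟩
    · exact hG.comp (((hφ₁.comp (hres (by omega))).prodMk
        ((hφ₀.comp (hres (by omega))).prodMk (measurable_pi_apply _))))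
    · rw [hrec, hx₀, hx₁]

theorem ProbabilityTheory.iIndepFun.indepFun_of_two_step [MeasurableSpace Ω]
    {μ : Measure Ω}
    (hH : iIndepFun H μ) (hHmeas : ∀ k, Measurable (H k)) (hG : Measurable G)
    (h0 : ∀ s, x 0 s = x₀) (h1 : ∀ s, x 1 s = x₁)
    (hrec : ∀ k s, x (k + 2) s = G (x (k + 1) s, x k s, H (k + 1) s)) (k : ℕ) :
    IndepFun (H k) (x k) μ := by
  obtain ⟨φ, hφ, hx⟩ := exists_measurable_eq_of_two_step hG h0 h1 hrec k
  have hdisj : Disjoint ({k} : Finset ℕ) (Finset.range k) := by simp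
  have h := (hH.indepFun_finset _ _ hdisj hHmeas).comp
    (measurable_pi_apply ⟨k, Finset.mem_singleton_self k⟩) hφ
  rwa [show x k = φ ∘ fun s (i : Finset.range k) => H i s from funext hx]

end TwoStep

def shbStep {m d : ℕ} (A : Matrix (Fin m) (Fin d) ℝ) (b : Fin m → ℝ) (ω β : ℝ)
    (p : (Fin d → ℝ) × (Fin d → ℝ) × Matrix (Fin m) (Fin m) ℝ) : Fin d → ℝ :=
  p.1 - ω • (Aᵀ *ᵥ (p.2.2 *ᵥ (A *ᵥ p.1 - b))) + β • (p.1 - p.2.1)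

section SHB

variable {Ω : Type*} [MeasurableSpace Ω] {μ : Measure Ω} [IsProbabilityMeasure μ] {m d : ℕ}
  {A : Matrix (Fin m) (Fin d) ℝ} {b : Fin m → ℝ} {ω β : ℝ}
  {H : ℕ → Ω → Matrix (Fin m) (Fin m) ℝ} {x : ℕ → Ω → Fin d → ℝ} {x₀ x₁ : Fin d → ℝ}

theorem measurable_shbStep : Measurable (shbStep A b ω β) := by
  unfold shbStep
  fun_prop

theorem integrable_shb (hH : iIndepFun H μ) (hHmeas : ∀ k, Measurable (H k))
    (hHint : ∀ k i j, Integrable (fun s => H k s i j) μ)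
    (h0 : ∀ s, x 0 s = x₀) (h1 : ∀ s, x 1 s = x₁)
    (hrec : ∀ k s, x (k + 2) s = shbStep A b ω β (x (k + 1) s, x k s, H (k + 1) s)) (k : ℕ) :
    Integrable (x k) μ := by
  induction k using Nat.twoStepInduction with
  | zero => rw [funext h0]; exact integrable_const x₀
  | one => rw [funext h1]; exact integrable_const x₁
  | more k ih₀ ih₁ =>
    have hind : IndepFun (H (k + 1)) (fun s => A *ᵥ x (k + 1) s - b) μ :=
      (hH.indepFun_of_two_step hHmeas measurable_shbStep h0 h1 hrec (k + 1)).comp measurable_id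
        (by fun_prop : Measurable fun y => A *ᵥ y - b)
    rw [funext (hrec k)]
    exact (ih₁.sub (((hind.integrable_mulVec (hHint (k + 1))
      ((ih₁.const_mulVec A).sub (integrable_const b))).const_mulVec Aᵀ).smul ω)).add
      ((ih₁.sub ih₀).smul β)

theorem shb_mean_error_recursion (hH : iIndepFun H μ) (hHmeas : ∀ k, Measurable (H k))
    (hHint : ∀ k i j, Integrable (fun s => H k s i j) μ) {W : Matrix (Fin m) (Fin m) ℝ}
    (hHmean : ∀ k i j, ∫ s, H k s i j ∂μ = W i j)
    (h0 : ∀ s, x 0 s = x₀) (h1 : ∀ s, x 1 s = x₁)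
    (hrec : ∀ k s, x (k + 2) s = shbStep A b ω β (x (k + 1) s, x k s, H (k + 1) s))
    {xstar : Fin d → ℝ} (hxstar : A *ᵥ xstar = b)
    {e : ℕ → Fin d → ℝ} (he : ∀ k, e k = ∫ s, (x k s - xstar) ∂μ) (k : ℕ) :
    e (k + 2) = e (k + 1) - ω • ((Aᵀ * W * A) *ᵥ e (k + 1)) + β • (e (k + 1) - e k) := by
  have hint (j : ℕ) : Integrable (fun s => x j s - xstar) μ :=
    (integrable_shb hH hHmeas hHint h0 h1 hrec j).sub (integrable_const xstar)
  have hind : IndepFun (H (k + 1)) (fun s => A *ᵥ (x (k + 1) s - xstar)) μ :=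
    (hH.indepFun_of_two_step hHmeas measurable_shbStep h0 h1 hrec (k + 1)).comp measurable_id
      (by fun_prop : Measurable fun y => A *ᵥ (y - xstar))
  have hAint := (hint (k + 1)).const_mulVec A
  have hHv := hind.integrable_mulVec (hHint _) hAint
  have hstep (s : Ω) : x (k + 2) s - xstar = (x (k + 1) s - xstar)
      - ω • (Aᵀ *ᵥ (H (k + 1) s *ᵥ (A *ᵥ (x (k + 1) s - xstar))))
      + β • ((x (k + 1) s - xstar) - (x k s - xstar)) := by
    rw [hrec, shbStep, mulVec_sub A, hxstar]
    module
  have hT : Integrable (fun s => ω • (Aᵀ *ᵥ (H (k + 1) s *ᵥ (A *ᵥ (x (k + 1) s - xstar))))) μ :=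
    (hHv.const_mulVec Aᵀ).smul ω
  have hM : Integrable (fun s => β • ((x (k + 1) s - xstar) - (x k s - xstar))) μ :=
    ((hint _).sub (hint _)).smul β
  have hL : Integrable (fun s => (x (k + 1) s - xstar)
      - ω • (Aᵀ *ᵥ (H (k + 1) s *ᵥ (A *ᵥ (x (k + 1) s - xstar))))) μ := (hint _).sub hT
  rw [he, he, he, funext hstep, integral_add hL hM, integral_sub (hint _) hT,
    integral_smul, integral_smul, integral_sub (hint _) (hint _), integral_const_mulVec _ hHv,
    hind.integral_mulVec (hHint _) hAint (hHmean _), integral_const_mulVec _ (hint _),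
    ← mulVec_mulVec, ← mulVec_mulVec]

theorem shb_mean_error_mem_range (h0 : ∀ s, x 0 s = x₀) (h1 : ∀ s, x 1 s = x₁)
    (hx01 : ∃ u, x₀ - x₁ = Aᵀ *ᵥ u) {xstar : Fin d → ℝ}
    (hproj : ∀ y, A *ᵥ y = A *ᵥ xstar → (x₀ - xstar) ⬝ᵥ (x₀ - xstar) ≤ (x₀ - y) ⬝ᵥ (x₀ - y))
    {W : Matrix (Fin m) (Fin m) ℝ} {e : ℕ → Fin d → ℝ} (he : ∀ k, e k = ∫ s, (x k s - xstar) ∂μ)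
    (hrec : ∀ k, e (k + 2) = e (k + 1) - ω • ((Aᵀ * W * A) *ᵥ e (k + 1)) + β • (e (k + 1) - e k))
    (k : ℕ) : e k ∈ LinearMap.range Aᵀ.mulVecLin := by
  have he0 : e 0 = x₀ - xstar := by simp [he, h0]
  have he1 : e 1 = x₁ - xstar := by simp [he, h1]
  have hrange0 : e 0 ∈ LinearMap.range Aᵀ.mulVecLin :=
    he0 ▸ A.sub_mem_range_mulVecLin_transpose_of_forall_le hproj
  refine mem_range_mulVecLin_transpose_of_recurrence hrange0 ?_ hrec k
  obtain ⟨u, hu⟩ := hx01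
  have he1' : e 1 = e 0 - Aᵀ.mulVecLin u := by rw [he0, he1, mulVecLin_apply, ← hu]; abel
  exact he1' ▸ sub_mem hrange0 ⟨u, rfl⟩

end SHB

theorem shb_L1_accelerated_tuned_general {m d : ℕ}
    {Ω : Type*} [MeasurableSpace Ω] (μ : Measure Ω) [IsProbabilityMeasure μ]
    (A : Matrix (Fin m) (Fin d) ℝ) (b : Fin m → ℝ)
    -- the i.i.d. random matrices `H_k`, a.s. symmetric psd with `H A Aᵀ H = H`
    (H : ℕ → Ω → Matrix (Fin m) (Fin m) ℝ)
    (hHmeas : ∀ k, Measurable (H k))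
    (hHiid : iIndepFun H μ)
    (hHident : ∀ k, μ.map (H k) = μ.map (H 0))
    (hHas : ∀ k, ∀ᵐ s ∂μ, (H k s).PosSemidef ∧ H k s * (A * Aᵀ) * H k s = H k s)
    (hHint : ∀ k i j, Integrable (fun s => H k s i j) μ)
    -- `W = E[H_0]`
    (W : Matrix (Fin m) (Fin m) ℝ)
    (hW : ∀ i j, W i j = ∫ s, H 0 s i j ∂μ)
    -- `λmin⁺` and `λmax`: smallest nonzero / largest eigenvalue of `Aᵀ W A`
    (lmin lmax : ℝ) (hlmin_pos : 0 < lmin) (hlmax_pos : 0 < lmax) (hle : lmin ≤ lmax)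
    (hlmin : ∀ v : Fin d → ℝ, (∃ u, v = Aᵀ *ᵥ u) →
      lmin * (v ⬝ᵥ v) ≤ v ⬝ᵥ ((Aᵀ * W * A) *ᵥ v))
    (hlmax : ∀ v : Fin d → ℝ, v ⬝ᵥ ((Aᵀ * W * A) *ᵥ v) ≤ lmax * (v ⬝ᵥ v))
    -- tuned parameters
    (ω β : ℝ) (hω : ω = 1 / lmax)
    (hβ : β = (1 - Real.sqrt (0.99 * lmin / lmax)) ^ 2)
    -- the SHB iterates, started from deterministic `x0, x1` with `x0 − x1 ∈ Range Aᵀ`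
    (x0 x1 : Fin d → ℝ) (hx01 : ∃ u, x0 - x1 = Aᵀ *ᵥ u)
    (x : ℕ → Ω → (Fin d → ℝ))
    (hx0 : ∀ s, x 0 s = x0) (hx1 : ∀ s, x 1 s = x1)
    (hrec : ∀ k, 1 ≤ k → ∀ s,
      x (k + 1) s = x k s - ω • (Aᵀ *ᵥ (H k s *ᵥ (A *ᵥ x k s - b)))
        + β • (x k s - x (k - 1) s))
    -- `x*` is the orthogonal projection of `x0` onto `{x : A x = b}`
    (xstar : Fin d → ℝ) (hxstar : A *ᵥ xstar = b)
    (hproj : ∀ y : Fin d → ℝ, A *ᵥ y = b →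
      (x0 - xstar) ⬝ᵥ (x0 - xstar) ≤ (x0 - y) ⬝ᵥ (x0 - y)) :
    ∃ C : ℝ, 0 < C ∧
      (∀ k : ℕ,
        (fun i => ∫ s, (x k s i - xstar i) ∂μ) ⬝ᵥ
            (fun i => ∫ s, (x k s i - xstar i) ∂μ)
          ≤ (1 - Real.sqrt (0.99 * lmin / lmax)) ^ (2 * k) * C) ∧
      -- iteration complexity `O(sqrt(λmax/λmin⁺) log(1/ε))`:
      ∃ c : ℝ, 0 < c ∧ ∃ ε₀ : ℝ, 0 < ε₀ ∧
        ∀ ε : ℝ, 0 < ε → ε < ε₀ →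
          ∀ k : ℕ, c * Real.sqrt (lmax / lmin) * Real.log (1 / ε) ≤ (k : ℝ) →
            (fun i => ∫ s, (x k s i - xstar i) ∂μ) ⬝ᵥ
                (fun i => ∫ s, (x k s i - xstar i) ∂μ) ≤ ε := by
  set e : ℕ → Fin d → ℝ := fun k => ∫ s, (x k s - xstar) ∂μ
  have hrec' (k : ℕ) (s : Ω) : x (k + 2) s = shbStep A b ω β (x (k + 1) s, x k s, H (k + 1) s) :=
    hrec (k + 1) le_add_self s
  have hHmean (k : ℕ) (i j : Fin m) : ∫ s, H k s i j ∂μ = W i j := by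
    rw [hW]
    exact (IdentDistrib.comp ⟨(hHmeas k).aemeasurable, (hHmeas 0).aemeasurable, hHident k⟩
      (measurable_matrix_apply i j)).integral_eq
  have herec := shb_mean_error_recursion hHiid hHmeas hHint hHmean hx0 hx1 hrec' hxstar
    (fun _ => rfl)
  have hMsymm : (Aᵀ * W * A)ᵀ = Aᵀ * W * A := by
    rw [transpose_mul, transpose_mul, transpose_transpose, Matrix.mul_assoc,
      transpose_eq_self_of_ae_isHermitian ((hHas 0).mono fun _ hs => hs.1.isHermitian) hW]
  have hMmin (k : ℕ) : lmin * (e k ⬝ᵥ e k) ≤ e k ⬝ᵥ (Aᵀ * W * A) *ᵥ e k := by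
    obtain ⟨u, hu⟩ := shb_mean_error_mem_range hx0 hx1 hx01
      (fun y hy => hproj y (hy.trans hxstar)) (fun _ => rfl) herec k
    exact hlmin _ ⟨u, hu.symm⟩
  have hσ : Real.sqrt (0.99 * lmin / lmax) ^ 2 < lmin / lmax := by
    rw [Real.sq_sqrt (by positivity), mul_div_assoc]
    linarith [div_pos hlmin_pos hlmax_pos]
  obtain ⟨C, hC, hbound⟩ := heavyBall_dotProduct_self_le hMsymm hlmax_pos hle hσ hlmax hMmin
    (by simpa only [hω, hβ] using herec)
  have hcoord (k : ℕ) : (fun i => ∫ s, (x k s i - xstar i) ∂μ) = e k := by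
    have hint := (integrable_shb hHiid hHmeas hHint hx0 hx1 hrec' k).sub (integrable_const xstar)
    exact funext fun i => (eval_integral (integrable_pi_iff.1 hint) i).symm
  refine ⟨C, hC, fun k => hcoord k ▸ hbound k, 1 / Real.sqrt 0.99, by positivity, 1 / C,
    by positivity, fun ε hε hεC k hk => hcoord k ▸ (hbound k).trans ?_⟩
  exact one_sub_sqrt_pow_two_mul_mul_le (by norm_num) (by norm_num) hlmin_pos hle hC.le hε
    ((lt_div_iff₀ hC).1 hεC).le hk

/-- Accelerated L1 convergence of SHB with the tuned parameters
`ω = 1/λmax` and `β = (1 − sqrt(0.99 λmin⁺/λmax))²`: there exists `C > 0` such that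
for all `k ≥ 0`, `‖E[x_k − x*]‖² ≤ (1 − sqrt(0.99 λmin⁺/λmax))^(2k) C`, where `x*`
is the orthogonal projection of `x0` onto `{x : A x = b}`; hence `‖E[x_k − x*]‖²`
falls below `ε` after `O(sqrt(λmax/λmin⁺) log(1/ε))` iterations. -/
theorem shb_L1_accelerated_tuned {m d : ℕ}
    {Ω : Type*} [MeasurableSpace Ω] (μ : Measure Ω) [IsProbabilityMeasure μ]
    (A : Matrix (Fin m) (Fin d) ℝ) (b : Fin m → ℝ)
    -- the i.i.d. random matrices `H_k`, a.s. symmetric psd with `H A Aᵀ H = H`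
    (H : ℕ → Ω → Matrix (Fin m) (Fin m) ℝ)
    (hHmeas : ∀ k, Measurable (H k))
    (hHiid : iIndepFun H μ)
    (hHident : ∀ k, μ.map (H k) = μ.map (H 0))
    (hHas : ∀ k, ∀ᵐ s ∂μ, (H k s).PosSemidef ∧ H k s * (A * Aᵀ) * H k s = H k s)
    (hHint : ∀ k i j, Integrable (fun s => H k s i j) μ)
    -- `W = E[H_0]`
    (W : Matrix (Fin m) (Fin m) ℝ)
    (hW : ∀ i j, W i j = ∫ s, H 0 s i j ∂μ)
    -- the objective `f` and exactness
    (f : (Fin d → ℝ) → ℝ)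
    (hf : ∀ y, f y = (1 / 2) * ((A *ᵥ y - b) ⬝ᵥ (W *ᵥ (A *ᵥ y - b))))
    (hexact : {y : Fin d → ℝ | f y = 0} = {y : Fin d → ℝ | A *ᵥ y = b})
    -- `λmin⁺` and `λmax`: smallest nonzero / largest eigenvalue of `Aᵀ W A`
    (lmin lmax : ℝ) (hlmin_pos : 0 < lmin) (hlmax_pos : 0 < lmax) (hle : lmin ≤ lmax)
    (hlmin : ∀ v : Fin d → ℝ, (∃ u, v = Aᵀ *ᵥ u) →
      lmin * (v ⬝ᵥ v) ≤ v ⬝ᵥ ((Aᵀ * W * A) *ᵥ v))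
    (hlmax : ∀ v : Fin d → ℝ, v ⬝ᵥ ((Aᵀ * W * A) *ᵥ v) ≤ lmax * (v ⬝ᵥ v))
    -- tuned parameters
    (ω β : ℝ) (hω : ω = 1 / lmax)
    (hβ : β = (1 - Real.sqrt (0.99 * lmin / lmax)) ^ 2)
    -- the SHB iterates, started from deterministic `x0, x1` with `x0 − x1 ∈ Range Aᵀ`
    (x0 x1 : Fin d → ℝ) (hx01 : ∃ u, x0 - x1 = Aᵀ *ᵥ u)
    (x : ℕ → Ω → (Fin d → ℝ))
    (hx0 : ∀ s, x 0 s = x0) (hx1 : ∀ s, x 1 s = x1)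
    (hrec : ∀ k, 1 ≤ k → ∀ s,
      x (k + 1) s = x k s - ω • (Aᵀ *ᵥ (H k s *ᵥ (A *ᵥ x k s - b)))
        + β • (x k s - x (k - 1) s))
    -- `x*` is the orthogonal projection of `x0` onto `{x : A x = b}`
    (xstar : Fin d → ℝ) (hxstar : A *ᵥ xstar = b)
    (hproj : ∀ y : Fin d → ℝ, A *ᵥ y = b →
      (x0 - xstar) ⬝ᵥ (x0 - xstar) ≤ (x0 - y) ⬝ᵥ (x0 - y)) :
    ∃ C : ℝ, 0 < C ∧
      (∀ k : ℕ,
        (fun i => ∫ s, (x k s i - xstar i) ∂μ) ⬝ᵥ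
            (fun i => ∫ s, (x k s i - xstar i) ∂μ)
          ≤ (1 - Real.sqrt (0.99 * lmin / lmax)) ^ (2 * k) * C) ∧
      -- iteration complexity `O(sqrt(λmax/λmin⁺) log(1/ε))`:
      ∃ c : ℝ, 0 < c ∧ ∃ ε₀ : ℝ, 0 < ε₀ ∧
        ∀ ε : ℝ, 0 < ε → ε < ε₀ →
          ∀ k : ℕ, c * Real.sqrt (lmax / lmin) * Real.log (1 / ε) ≤ (k : ℝ) →
            (fun i => ∫ s, (x k s i - xstar i) ∂μ) ⬝ᵥ
                (fun i => ∫ s, (x k s i - xstar i) ∂μ) ≤ ε :=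
  shb_L1_accelerated_tuned_general μ A b H hHmeas hHiid hHident hHas hHint W hW lmin lmax hlmin_pos
    hlmax_pos hle hlmin hlmax ω β hω hβ x0 x1 hx01 x hx0 hx1 hrec xstar hxstar hproj
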